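/- Let Γ be the subgroup of PSL₂(ℤ) generated by the images of the four matrices BA⁻¹, A⁻¹B, B⁻¹A⁻¹B², and B⁻³. Then the image of ABA⁻²B⁻² = [[77,-18],[30,-7]] in PSL₂(ℤ) lies in Γ̄(6) but does not lie in Γ; in particular Γ̄(6) is not contained in Γ. -/

import Mathlib

/-!
`ABA⁻²B⁻² ≡ -I (mod 6)`, so its image lies in `Γ̄(6)`. For the non-membership, `Ā` and `B̄`
freely generate a subgroup of `PSL₂(ℤ)`: `A` and `B` are free in `SL(2, ℤ)` by ping-pong on the
slopes of nonzero integer vectors (Sanov), and `⟨A, B⟩` avoids the central element `-I`, since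
all its elements have upper left entry `≡ 1 (mod 4)`. Pulled back to the free group on `a, b`,
the four generators of `Γ` have exponent sum divisible by 3, whereas `a b a⁻² b⁻²` has exponent
sum `-2`.
-/

/-- `SL(2, ℤ)`. -/
abbrev SL2Z := Matrix.SpecialLinearGroup (Fin 2) ℤ

/-- `PSL₂(ℤ)`, the quotient of `SL(2, ℤ)` by its center `{±I}`. -/
abbrev PSL2Z := SL2Z ⧸ Subgroup.center SL2Z

/-- The projection `SL(2, ℤ) → PSL₂(ℤ)`. -/
def projSL : SL2Z →* PSL2Z := QuotientGroup.mk' (Subgroup.center SL2Z)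

/-- `Γ̄(N)`, the image of the principal congruence subgroup `Γ(N)` in `PSL₂(ℤ)`. -/
def GammaBar (N : ℕ) : Subgroup PSL2Z := (CongruenceSubgroup.Gamma N).map projSL

/-- The matrix `A = [[1,2],[0,1]]` in `SL(2, ℤ)`. -/
def matA : SL2Z := ⟨!![1, 2; 0, 1], by norm_num [Matrix.det_fin_two_of]⟩

/-- The matrix `B = [[1,0],[2,1]]` in `SL(2, ℤ)`. -/
def matB : SL2Z := ⟨!![1, 0; 2, 1], by norm_num [Matrix.det_fin_two_of]⟩

/-- The matrix `T = [[1,1],[0,1]]` in `SL(2, ℤ)`. -/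
def matT : SL2Z := ⟨!![1, 1; 0, 1], by norm_num [Matrix.det_fin_two_of]⟩

/-- The matrix `L = [[1,0],[1,1]]` in `SL(2, ℤ)`. -/
def matL : SL2Z := ⟨!![1, 0; 1, 1], by norm_num [Matrix.det_fin_two_of]⟩

/-- `Ā`, the image of `A` in `PSL₂(ℤ)`. -/
def Abar : PSL2Z := projSL matA

/-- `B̄`, the image of `B` in `PSL₂(ℤ)`. -/
def Bbar : PSL2Z := projSL matB

def matW : SL2Z := ⟨!![77, -18; 30, -7], by norm_num [Matrix.det_fin_two_of]⟩

lemma matA_mul_matB_mul_matA_inv_sq_mul_matB_inv_sq :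
    matA * matB * matA⁻¹ ^ 2 * matB⁻¹ ^ 2 = matW := by
  rw [inv_pow, inv_pow, mul_inv_eq_iff_eq_mul, mul_inv_eq_iff_eq_mul]
  ext i j
  simp only [Matrix.SpecialLinearGroup.coe_mul, Matrix.SpecialLinearGroup.coe_pow]
  fin_cases i <;> fin_cases j <;>
    simp [matA, matB, matW, pow_two, Matrix.mul_apply, Fin.sum_univ_two]

lemma neg_matW_mem_Gamma_six : -matW ∈ CongruenceSubgroup.Gamma 6 := by
  rw [CongruenceSubgroup.Gamma_mem]
  simp only [matW]
  decide

lemma neg_one_mem_center_SL2Z : (-1 : SL2Z) ∈ Subgroup.center SL2Z :=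
  Subgroup.mem_center_iff.mpr fun g => by rw [mul_neg_one, neg_one_mul]

lemma eq_one_or_eq_neg_one_of_mem_center_SL2Z {g : SL2Z} (hg : g ∈ Subgroup.center SL2Z) :
    g = 1 ∨ g = -1 := by
  obtain ⟨r, hr, hrg⟩ := Matrix.SpecialLinearGroup.mem_center_iff.mp hg
  rcases Int.isUnit_iff.mp (IsUnit.of_pow_eq_one hr two_ne_zero) with rfl | rfl
  · left; ext1; simp [← hrg]
  · right; ext1; simp [← hrg]

lemma projSL_neg (g : SL2Z) : projSL (-g) = projSL g := by
  rw [← neg_one_mul, map_mul, projSL, QuotientGroup.mk'_apply,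
    (QuotientGroup.eq_one_iff _).mpr neg_one_mem_center_SL2Z, one_mul]

lemma Abar_mul_Bbar_mul_Abar_inv_sq_mul_Bbar_inv_sq :
    Abar * Bbar * Abar⁻¹ ^ 2 * Bbar⁻¹ ^ 2 = projSL (-matW) := by
  rw [projSL_neg, ← matA_mul_matB_mul_matA_inv_sq_mul_matB_inv_sq]
  simp only [Abar, Bbar, map_mul, map_pow, map_inv]

lemma Abar_mul_Bbar_mul_Abar_inv_sq_mul_Bbar_inv_sq_mem_GammaBar_six :
    Abar * Bbar * Abar⁻¹ ^ 2 * Bbar⁻¹ ^ 2 ∈ GammaBar 6 := by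
  rw [Abar_mul_Bbar_mul_Abar_inv_sq_mul_Bbar_inv_sq]
  exact Subgroup.mem_map_of_mem projSL neg_matW_mem_Gamma_six

lemma matA_smul (v : Fin 2 → ℤ) : matA • v = ![v 0 + 2 * v 1, v 1] := by
  rw [Matrix.SpecialLinearGroup.smul_def]
  ext i; fin_cases i <;> simp [matA, Matrix.mulVec, dotProduct]

lemma matB_smul (v : Fin 2 → ℤ) : matB • v = ![v 0, 2 * v 0 + v 1] := by
  rw [Matrix.SpecialLinearGroup.smul_def]
  ext i; fin_cases i <;> simp [matB, Matrix.mulVec, dotProduct]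

lemma matA_inv_smul (v : Fin 2 → ℤ) : matA⁻¹ • v = ![v 0 - 2 * v 1, v 1] := by
  rw [inv_smul_eq_iff, matA_smul]
  ext i; fin_cases i <;> simp

lemma matB_inv_smul (v : Fin 2 → ℤ) : matB⁻¹ • v = ![v 0, v 1 - 2 * v 0] := by
  rw [inv_smul_eq_iff, matB_smul]
  ext i; fin_cases i <;> simp

lemma sq_add_sq_pos_of_ne_zero {R : Type*} [Ring R] [LinearOrder R] [IsStrictOrderedRing R]
    {v : Fin 2 → R} (hv : v ≠ 0) : 0 < v 0 ^ 2 + v 1 ^ 2 := by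
  obtain ⟨i, hi⟩ := Function.ne_iff.mp hv
  fin_cases i
  · exact add_pos_of_pos_of_nonneg (sq_pos_of_ne_zero hi) (sq_nonneg _)
  · exact add_pos_of_nonneg_of_pos (sq_nonneg _) (sq_pos_of_ne_zero hi)

def nonzeroVectors : SubMulAction SL2Z (Fin 2 → ℤ) where
  carrier := {v | v ≠ 0}
  smul_mem' g _ hv := (smul_ne_zero_iff_ne g).mpr hv

@[simp]
lemma mem_nonzeroVectors {v : Fin 2 → ℤ} : v ∈ nonzeroVectors ↔ v ≠ 0 := Iff.rfl

-- In terms of the slope `t = v 0 / v 1`, these are `t ∈ [1, ∞]` and `t ∈ [0, 1)` (for `X`),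
-- `t < -1` and `t ∈ [-1, 0)` (for `Y`); `A` acts by `t ↦ t + 2` and `B` by `1/t ↦ 1/t + 2`.
def slopeSetX : Fin 2 → Set (Fin 2 → ℤ) :=
  ![{v | v 1 ^ 2 ≤ v 0 * v 1}, {v | 0 ≤ v 0 * v 1 ∧ v 0 * v 1 < v 1 ^ 2}]

def slopeSetY : Fin 2 → Set (Fin 2 → ℤ) :=
  ![{v | v 0 * v 1 < -v 1 ^ 2}, {v | -v 1 ^ 2 ≤ v 0 * v 1 ∧ v 0 * v 1 < 0}]

lemma pairwise_disjoint_slopeSetX : Pairwise (Function.onFun Disjoint slopeSetX) := by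
  intro i j hij
  fin_cases i <;> fin_cases j <;> simp_all [Function.onFun, Set.disjoint_left, slopeSetX]

lemma pairwise_disjoint_slopeSetY : Pairwise (Function.onFun Disjoint slopeSetY) := by
  intro i j hij
  fin_cases i <;> fin_cases j <;> simp_all [Function.onFun, Set.disjoint_left, slopeSetY]

lemma disjoint_slopeSetX_slopeSetY (i j : Fin 2) : Disjoint (slopeSetX i) (slopeSetY j) := by
  rw [Set.disjoint_left]
  intro v hX hY
  fin_cases i <;> fin_cases j <;>
    simp only [slopeSetX, slopeSetY, Fin.zero_eta, Fin.mk_one, Matrix.cons_val_zero,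
      Matrix.cons_val_one, Matrix.cons_val_fin_one, Set.mem_ofPred_eq] at hX hY <;>
    linarith [sq_nonneg (v 1)]

lemma matA_smul_mem_slopeSetX {v : Fin 2 → ℤ} (hv : v ∉ slopeSetY 0) :
    matA • v ∈ slopeSetX 0 := by
  simp only [slopeSetX, slopeSetY, Matrix.cons_val_zero, Matrix.cons_val_one,
    Matrix.cons_val_fin_one, Set.mem_ofPred_eq, not_lt, matA_smul] at hv ⊢
  linarith

lemma matA_inv_smul_mem_slopeSetY {v : Fin 2 → ℤ} (hv : v ∉ slopeSetX 0) :
    matA⁻¹ • v ∈ slopeSetY 0 := by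
  simp only [slopeSetX, slopeSetY, Matrix.cons_val_zero, Matrix.cons_val_one,
    Matrix.cons_val_fin_one, Set.mem_ofPred_eq, not_le, matA_inv_smul] at hv ⊢
  linarith

lemma matB_smul_mem_slopeSetX {v : Fin 2 → ℤ} (hv₀ : v ≠ 0) (hv : v ∉ slopeSetY 1) :
    matB • v ∈ slopeSetX 1 := by
  have hpos := sq_add_sq_pos_of_ne_zero hv₀
  simp only [slopeSetX, slopeSetY, Matrix.cons_val_zero, Matrix.cons_val_one,
    Matrix.cons_val_fin_one, Set.mem_ofPred_eq, not_and, not_lt, matB_smul] at hv ⊢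
  rcases le_or_gt (-v 1 ^ 2) (v 0 * v 1) with h | h
  · have := hv h
    constructor <;> nlinarith
  · constructor <;> nlinarith [sq_nonneg (v 0 + v 1), sq_nonneg (v 0), sq_nonneg (v 1)]

lemma matB_inv_smul_mem_slopeSetY {v : Fin 2 → ℤ} (hv₀ : v ≠ 0) (hv : v ∉ slopeSetX 1) :
    matB⁻¹ • v ∈ slopeSetY 1 := by
  have hpos := sq_add_sq_pos_of_ne_zero hv₀
  simp only [slopeSetX, slopeSetY, Matrix.cons_val_zero, Matrix.cons_val_one,
    Matrix.cons_val_fin_one, Set.mem_ofPred_eq, not_and, not_lt, matB_inv_smul] at hv ⊢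
  rcases lt_or_ge (v 0 * v 1) 0 with h | h
  · constructor <;> nlinarith [sq_nonneg (v 0 + v 1), sq_nonneg (v 0), sq_nonneg (v 1)]
  · have := hv h
    constructor <;> nlinarith [sq_nonneg (v 0 - v 1), sq_nonneg (v 0), sq_nonneg (v 1)]

theorem injective_lift_matA_matB : Function.Injective (FreeGroup.lift ![matA, matB]) := by
  let X (i : Fin 2) : Set nonzeroVectors := (↑) ⁻¹' slopeSetX i
  let Y (i : Fin 2) : Set nonzeroVectors := (↑) ⁻¹' slopeSetY i
  apply FreeGroup.injective_lift_of_ping_pong ![matA, matB] X Y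
  · intro i
    fin_cases i
    · exact ⟨⟨![1, 0], by simp⟩, by simp [X, slopeSetX]⟩
    · exact ⟨⟨![0, 1], by simp⟩, by simp [X, slopeSetX]⟩
  · exact fun i j hij => (pairwise_disjoint_slopeSetX hij).preimage _
  · exact fun i j hij => (pairwise_disjoint_slopeSetY hij).preimage _
  · exact fun i j => (disjoint_slopeSetX_slopeSetY i j).preimage _
  · rintro i _ ⟨v, hv, rfl⟩
    fin_cases i
    exacts [matA_smul_mem_slopeSetX hv, matB_smul_mem_slopeSetX v.2 hv]
  · rintro i _ ⟨v, hv, rfl⟩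
    fin_cases i
    exacts [matA_inv_smul_mem_slopeSetY hv, matB_inv_smul_mem_slopeSetY v.2 hv]

-- By Sanov's theorem this subgroup is exactly `⟨A, B⟩`.
def sanovSubgroup : Subgroup SL2Z where
  carrier := {g | 4 ∣ g 0 0 - 1 ∧ 2 ∣ g 0 1 ∧ 2 ∣ g 1 0}
  one_mem' := by decide
  mul_mem' := by
    rintro g h ⟨hg₀₀, hg₀₁, hg₁₀⟩ ⟨hh₀₀, hh₀₁, hh₁₀⟩
    simp only [Set.mem_ofPred_eq, Matrix.SpecialLinearGroup.coe_mul, Matrix.mul_apply,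
      Fin.sum_univ_two]
    refine ⟨?_, ?_, ?_⟩
    · have : g 0 0 * h 0 0 + g 0 1 * h 1 0 - 1 =
          (g 0 0 - 1) * h 0 0 + (h 0 0 - 1) + g 0 1 * h 1 0 := by ring
      rw [this]
      exact dvd_add (dvd_add (hg₀₀.mul_right _) hh₀₀) (mul_dvd_mul hg₀₁ hh₁₀)
    · exact dvd_add (hh₀₁.mul_left _) (hg₀₁.mul_right _)
    · exact dvd_add (hg₁₀.mul_right _) (hh₁₀.mul_left _)
  inv_mem' := by
    rintro g ⟨hg₀₀, hg₀₁, hg₁₀⟩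
    have hdet : g 0 0 * g 1 1 - g 0 1 * g 1 0 = 1 := by
      rw [← Matrix.det_fin_two]; exact g.det_coe
    simp only [Matrix.SpecialLinearGroup.SL2_inv_expl]
    refine ⟨?_, hg₀₁.neg_right, hg₁₀.neg_right⟩
    have : g 1 1 - 1 = g 0 1 * g 1 0 - (g 0 0 - 1) * g 1 1 := by linear_combination hdet
    simp only [Matrix.cons_val', Matrix.cons_val_zero, Matrix.empty_val',
      Matrix.cons_val_fin_one]
    rw [this]
    exact dvd_sub (mul_dvd_mul hg₀₁ hg₁₀) (hg₀₀.mul_right _)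

lemma mem_sanovSubgroup {g : SL2Z} :
    g ∈ sanovSubgroup ↔ 4 ∣ g 0 0 - 1 ∧ 2 ∣ g 0 1 ∧ 2 ∣ g 1 0 :=
  Iff.rfl

lemma range_lift_matA_matB_le_sanovSubgroup :
    (FreeGroup.lift ![matA, matB]).range ≤ sanovSubgroup := by
  refine FreeGroup.range_lift_le ?_
  rintro _ ⟨i, rfl⟩
  rw [SetLike.mem_coe, mem_sanovSubgroup]
  fin_cases i <;> simp [matA, matB]

lemma neg_one_not_mem_sanovSubgroup : (-1 : SL2Z) ∉ sanovSubgroup := by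
  simp [mem_sanovSubgroup]

theorem QuotientGroup.injective_mk'_comp_of_disjoint {G H : Type*} [Group G] [Group H]
    {N : Subgroup H} [N.Normal] {f : G →* H} (hf : Function.Injective f)
    (hfN : Disjoint f.range N) : Function.Injective ((QuotientGroup.mk' N).comp f) := by
  rw [injective_iff_map_eq_one] at hf ⊢
  intro g hg
  rw [MonoidHom.comp_apply, QuotientGroup.mk'_apply, QuotientGroup.eq_one_iff] at hg
  exact hf g (Subgroup.disjoint_def.mp hfN ⟨g, rfl⟩ hg)

lemma disjoint_range_lift_matA_matB_center :
    Disjoint (FreeGroup.lift ![matA, matB]).range (Subgroup.center SL2Z) := by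
  refine Subgroup.disjoint_def.mpr fun {g} hg hcenter => ?_
  refine (eq_one_or_eq_neg_one_of_mem_center_SL2Z hcenter).resolve_right ?_
  rintro rfl
  exact neg_one_not_mem_sanovSubgroup (range_lift_matA_matB_le_sanovSubgroup hg)

theorem injective_lift_Abar_Bbar : Function.Injective (FreeGroup.lift ![Abar, Bbar]) := by
  have : FreeGroup.lift ![Abar, Bbar] = projSL.comp (FreeGroup.lift ![matA, matB]) := by
    ext i
    fin_cases i <;> rfl
  rw [this]
  exact QuotientGroup.injective_mk'_comp_of_disjoint injective_lift_matA_matB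
    disjoint_range_lift_matA_matB_center

def FreeGroup.exponentSumMod {α : Type*} (n : ℕ) : FreeGroup α →* Multiplicative (ZMod n) :=
  FreeGroup.lift fun _ => Multiplicative.ofAdd 1

@[simp]
lemma FreeGroup.exponentSumMod_of {α : Type*} (n : ℕ) (a : α) :
    exponentSumMod n (of a) = Multiplicative.ofAdd 1 :=
  lift_apply_of

/-- For the 3-star group `Γ = ⟨BA⁻¹, A⁻¹B, B⁻¹A⁻¹B², B⁻³⟩`, the image of `ABA⁻²B⁻²` lies
in `Γ̄(6)` but not in `Γ`; in particular `Γ̄(6) ⊄ Γ`. -/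
theorem three_star_misses_element_of_gamma_six :
    Abar * Bbar * Abar⁻¹ ^ 2 * Bbar⁻¹ ^ 2 ∈ GammaBar 6 ∧
    Abar * Bbar * Abar⁻¹ ^ 2 * Bbar⁻¹ ^ 2 ∉
      Subgroup.closure ({Bbar * Abar⁻¹, Abar⁻¹ * Bbar, Bbar⁻¹ * Abar⁻¹ * Bbar ^ 2,
        Bbar⁻¹ ^ 3} : Set PSL2Z) ∧
    ¬ GammaBar 6 ≤ Subgroup.closure ({Bbar * Abar⁻¹, Abar⁻¹ * Bbar,
        Bbar⁻¹ * Abar⁻¹ * Bbar ^ 2, Bbar⁻¹ ^ 3} : Set PSL2Z) := by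
  let φ := FreeGroup.lift ![Abar, Bbar]
  let a : FreeGroup (Fin 2) := .of 0
  let b : FreeGroup (Fin 2) := .of 1
  have hS : φ '' {b * a⁻¹, a⁻¹ * b, b⁻¹ * a⁻¹ * b ^ 2, b⁻¹ ^ 3} =
      {Bbar * Abar⁻¹, Abar⁻¹ * Bbar, Bbar⁻¹ * Abar⁻¹ * Bbar ^ 2, Bbar⁻¹ ^ 3} := by
    simp [φ, a, b, Set.image_insert_eq]
  have hw : φ (a * b * a⁻¹ ^ 2 * b⁻¹ ^ 2) = Abar * Bbar * Abar⁻¹ ^ 2 * Bbar⁻¹ ^ 2 := by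
    simp [φ, a, b]
  have hΓ : Subgroup.closure {b * a⁻¹, a⁻¹ * b, b⁻¹ * a⁻¹ * b ^ 2, b⁻¹ ^ 3} ≤
      (FreeGroup.exponentSumMod 3).ker :=
    (Subgroup.closure_le _).mpr <| by
      rintro _ (rfl | rfl | rfl | rfl) <;> exact MonoidHom.mem_ker.mpr (by decide)
  have hw_not_mem_ker : a * b * a⁻¹ ^ 2 * b⁻¹ ^ 2 ∉ (FreeGroup.exponentSumMod 3).ker :=
    mt MonoidHom.mem_ker.mp (by decide)
  have hmem := Abar_mul_Bbar_mul_Abar_inv_sq_mul_Bbar_inv_sq_mem_GammaBar_six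
  have hnotmem : Abar * Bbar * Abar⁻¹ ^ 2 * Bbar⁻¹ ^ 2 ∉ Subgroup.closure
      {Bbar * Abar⁻¹, Abar⁻¹ * Bbar, Bbar⁻¹ * Abar⁻¹ * Bbar ^ 2, Bbar⁻¹ ^ 3} := by
    rw [← hS, ← MonoidHom.map_closure, ← hw,
      Subgroup.mem_map_iff_mem injective_lift_Abar_Bbar]
    exact fun h => hw_not_mem_ker (hΓ h)
  exact ⟨hmem, hnotmem, fun hle => hnotmem (hle hmem)⟩
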